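/- Let k ≥ 2, m ≥ 1 and ε ∈ (0,1/k]. Define A_m = (1/(σ_max·√(2π)))·exp(−m²/σ_min²), a_m = 1/σ_min², B_{m,k} = (k/(σ_min·√(2π)))·exp(m²/(2σ_max²)), b_m = 1/(4σ_max²), and K_{m,k} = max{−log A_m, log B_{m,k}} + max{a_m, b_m}. Then for every θ ∈ S_{m,ε} and every x ∈ ℝ: A_m·e^{−a_m x²} ≤ f_θ(x) ≤ B_{m,k}·e^{−b_m x²}, and |log f_θ(x)| ≤ K_{m,k}·(1 + x²). -/
import Mathlib


/-- Gaussian density with mean `μ` and standard deviation `σ`. -/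
noncomputable def gaussDensity (x μ σ : ℝ) : ℝ :=
  (Real.sqrt (2 * Real.pi))⁻¹ * σ⁻¹ * Real.exp (-(x - μ) ^ 2 / (2 * σ ^ 2))

/-- `k`-component Gaussian mixture density with weights `w`, means `μ`, st. devs `σ`. -/
noncomputable def mixDensity (k : ℕ) (w μ σ : Fin k → ℝ) (x : ℝ) : ℝ :=
  ∑ j, w j * gaussDensity x (μ j) (σ j)

/-- Membership in the compact sieve `S_{m,ε}`. -/
def memSieve (k : ℕ) (m ε : ℝ) (w μ σ : Fin k → ℝ) : Prop :=
  (∀ j, 0 ≤ w j) ∧ (∑ j, w j = 1) ∧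
    ∀ j, ε ≤ w j ∧ |μ j| ≤ m ∧ Real.exp (-m) ≤ σ j ∧ σ j ≤ Real.exp m

private lemma logEnvAux (M N a b lA lB y x2 : ℝ) (hM : 0 ≤ M) (hN : 0 ≤ N)
    (hx2 : 0 ≤ x2) (h1 : -lA ≤ M) (h2 : lB ≤ M) (ha : a ≤ N) (hb : 0 ≤ b)
    (hlo : lA - a * x2 ≤ y) (hhi : y ≤ lB - b * x2) : |y| ≤ (M + N) * (1 + x2) := by
  rw [abs_le]
  constructor <;>
    nlinarith [mul_le_mul_of_nonneg_right ha hx2, mul_nonneg hb hx2,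
      mul_nonneg hN hx2, mul_nonneg hM hx2]

/-- Explicit two-sided Gaussian envelopes and logarithmic envelope for mixture densities
on the sieve `S_{m,ε}` (with `σ_min = e^{-m}`, `σ_max = e^m`). -/
theorem mixture_envelopes (k : ℕ) (hk : 2 ≤ k) (m ε : ℝ) (hm : 1 ≤ m)
    (hε : 0 < ε) (hεk : ε ≤ 1 / k)
    (w μ σ : Fin k → ℝ) (hθ : memSieve k m ε w μ σ) (x : ℝ) :
    (Real.exp m * Real.sqrt (2 * Real.pi))⁻¹ * Real.exp (-(m ^ 2) / Real.exp (-m) ^ 2)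
        * Real.exp (-(1 / Real.exp (-m) ^ 2) * x ^ 2)
      ≤ mixDensity k w μ σ x ∧
    mixDensity k w μ σ x
      ≤ (k / (Real.exp (-m) * Real.sqrt (2 * Real.pi)))
          * Real.exp (m ^ 2 / (2 * Real.exp m ^ 2))
          * Real.exp (-(1 / (4 * Real.exp m ^ 2)) * x ^ 2) ∧
    |Real.log (mixDensity k w μ σ x)|
      ≤ (max (-Real.log ((Real.exp m * Real.sqrt (2 * Real.pi))⁻¹
              * Real.exp (-(m ^ 2) / Real.exp (-m) ^ 2)))
            (Real.log ((k / (Real.exp (-m) * Real.sqrt (2 * Real.pi)))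
              * Real.exp (m ^ 2 / (2 * Real.exp m ^ 2))))
          + max (1 / Real.exp (-m) ^ 2) (1 / (4 * Real.exp m ^ 2))) * (1 + x ^ 2) := by
  obtain ⟨hw0, hw1, hj⟩ := hθ
  have hpi : (1:ℝ) ≤ 2 * Real.pi := by nlinarith [Real.pi_gt_three]
  have hsqrt : (1:ℝ) ≤ Real.sqrt (2 * Real.pi) := by
    rw [show (1:ℝ) = Real.sqrt 1 by simp]
    exact Real.sqrt_le_sqrt hpi
  have hsqrt0 : (0:ℝ) < Real.sqrt (2 * Real.pi) := lt_of_lt_of_le one_pos hsqrt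
  have hem1 : (1:ℝ) ≤ Real.exp m := by
    rw [← Real.exp_zero]; exact Real.exp_le_exp.mpr (by linarith)
  have heM : (0:ℝ) < Real.exp m := Real.exp_pos m
  have hemn : (0:ℝ) < Real.exp (-m) := Real.exp_pos (-m)
  have hE : (0:ℝ) < Real.exp (-m) ^ 2 := by positivity
  set A := (Real.exp m * Real.sqrt (2 * Real.pi))⁻¹ * Real.exp (-(m ^ 2) / Real.exp (-m) ^ 2)
    with hA
  set a := 1 / Real.exp (-m) ^ 2 with ha
  set B := (k / (Real.exp (-m) * Real.sqrt (2 * Real.pi)))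
      * Real.exp (m ^ 2 / (2 * Real.exp m ^ 2)) with hB
  set b := 1 / (4 * Real.exp m ^ 2) with hb
  have hApos : 0 < A := by rw [hA]; positivity
  have hmsq : 0 ≤ m ^ 2 := sq_nonneg m
  -- per-component lower bound
  have hlow : ∀ j, A * Real.exp (-a * x ^ 2) ≤ gaussDensity x (μ j) (σ j) := by
    intro j
    obtain ⟨hεj, hμj, hσl, hσu⟩ := hj j
    have hσ0 : 0 < σ j := lt_of_lt_of_le hemn hσl
    have hμ2 : (μ j) ^ 2 ≤ m ^ 2 := by
      rw [← sq_abs]; exact pow_le_pow_left₀ (abs_nonneg _) hμj 2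
    have hEσ : Real.exp (-m) ^ 2 ≤ (σ j) ^ 2 := pow_le_pow_left₀ hemn.le hσl 2
    have hexp : -(m ^ 2) / Real.exp (-m) ^ 2 + -a * x ^ 2
        ≤ -(x - μ j) ^ 2 / (2 * (σ j) ^ 2) := by
      rw [ha]
      have key : (x - μ j) ^ 2 / (2 * (σ j) ^ 2) ≤ (m ^ 2 + x ^ 2) / Real.exp (-m) ^ 2 := by
        rw [div_le_div_iff₀ (by positivity) hE]
        nlinarith [sq_nonneg (x + μ j), mul_le_mul_of_nonneg_left hEσ
          (show (0:ℝ) ≤ m ^ 2 + x ^ 2 by positivity),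
          mul_le_mul_of_nonneg_right hμ2 hE.le]
      have : -((m ^ 2 + x ^ 2) / Real.exp (-m) ^ 2) ≤ -(x - μ j) ^ 2 / (2 * (σ j) ^ 2) := by
        rw [neg_div]; linarith
      calc -(m ^ 2) / Real.exp (-m) ^ 2 + -(1 / Real.exp (-m) ^ 2) * x ^ 2
          = -((m ^ 2 + x ^ 2) / Real.exp (-m) ^ 2) := by ring
        _ ≤ _ := this
    unfold gaussDensity
    rw [hA]
    have hσinv : (Real.exp m)⁻¹ ≤ (σ j)⁻¹ := by
      apply inv_anti₀ hσ0 hσu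
    calc (Real.exp m * Real.sqrt (2 * Real.pi))⁻¹ * Real.exp (-(m ^ 2) / Real.exp (-m) ^ 2)
          * Real.exp (-a * x ^ 2)
        = (Real.sqrt (2 * Real.pi))⁻¹ * (Real.exp m)⁻¹
            * Real.exp (-(m ^ 2) / Real.exp (-m) ^ 2 + -a * x ^ 2) := by
          rw [mul_inv, Real.exp_add]; ring
      _ ≤ (Real.sqrt (2 * Real.pi))⁻¹ * (σ j)⁻¹
            * Real.exp (-(x - μ j) ^ 2 / (2 * (σ j) ^ 2)) := by
          apply mul_le_mul
          · exact mul_le_mul_of_nonneg_left hσinv (by positivity)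
          · exact Real.exp_le_exp.mpr hexp
          · positivity
          · positivity
  -- lower bound for the mixture
  have hL : A * Real.exp (-a * x ^ 2) ≤ mixDensity k w μ σ x := by
    unfold mixDensity
    calc A * Real.exp (-a * x ^ 2) = ∑ j, w j * (A * Real.exp (-a * x ^ 2)) := by
          rw [← Finset.sum_mul, hw1, one_mul]
      _ ≤ ∑ j, w j * gaussDensity x (μ j) (σ j) :=
          Finset.sum_le_sum fun j _ => mul_le_mul_of_nonneg_left (hlow j) (hw0 j)
  -- per-component upper bound
  have hU0 : ∀ j, gaussDensity x (μ j) (σ j)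
      ≤ (1 / (Real.exp (-m) * Real.sqrt (2 * Real.pi)))
          * Real.exp (m ^ 2 / (2 * Real.exp m ^ 2)) * Real.exp (-b * x ^ 2) := by
    intro j
    obtain ⟨hεj, hμj, hσl, hσu⟩ := hj j
    have hσ0 : 0 < σ j := lt_of_lt_of_le hemn hσl
    have hμ2 : (μ j) ^ 2 ≤ m ^ 2 := by
      rw [← sq_abs]; exact pow_le_pow_left₀ (abs_nonneg _) hμj 2
    have hσE : (σ j) ^ 2 ≤ Real.exp m ^ 2 := pow_le_pow_left₀ hσ0.le hσu 2
    have hexp : -(x - μ j) ^ 2 / (2 * (σ j) ^ 2)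
        ≤ m ^ 2 / (2 * Real.exp m ^ 2) + -b * x ^ 2 := by
      rw [hb]
      have key : (x ^ 2 / 2 - m ^ 2) / (2 * Real.exp m ^ 2)
          ≤ (x - μ j) ^ 2 / (2 * (σ j) ^ 2) := by
        rcases le_or_gt (x ^ 2 / 2 - m ^ 2) 0 with h | h
        · exact le_trans (div_nonpos_of_nonpos_of_nonneg h (by positivity)) (by positivity)
        · rw [div_le_div_iff₀ (by positivity) (by positivity)]
          nlinarith [sq_nonneg (x - 2 * μ j), mul_le_mul_of_nonneg_left hσE h.le,
            mul_le_mul_of_nonneg_right hμ2 (by positivity : (0:ℝ) ≤ 2 * (σ j) ^ 2)]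
      have h2 : -(x - μ j) ^ 2 / (2 * (σ j) ^ 2)
          ≤ -((x ^ 2 / 2 - m ^ 2) / (2 * Real.exp m ^ 2)) := by
        rw [neg_div]; linarith
      calc -(x - μ j) ^ 2 / (2 * (σ j) ^ 2)
          ≤ -((x ^ 2 / 2 - m ^ 2) / (2 * Real.exp m ^ 2)) := h2
        _ = m ^ 2 / (2 * Real.exp m ^ 2) + -(1 / (4 * Real.exp m ^ 2)) * x ^ 2 := by ring
    unfold gaussDensity
    have hσinv : (σ j)⁻¹ ≤ (Real.exp (-m))⁻¹ := inv_anti₀ hemn hσl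
    calc (Real.sqrt (2 * Real.pi))⁻¹ * (σ j)⁻¹ * Real.exp (-(x - μ j) ^ 2 / (2 * (σ j) ^ 2))
        ≤ (Real.sqrt (2 * Real.pi))⁻¹ * (Real.exp (-m))⁻¹
            * Real.exp (m ^ 2 / (2 * Real.exp m ^ 2) + -b * x ^ 2) := by
          apply mul_le_mul
          · exact mul_le_mul_of_nonneg_left hσinv (by positivity)
          · exact Real.exp_le_exp.mpr hexp
          · positivity
          · positivity
      _ = (1 / (Real.exp (-m) * Real.sqrt (2 * Real.pi)))
            * Real.exp (m ^ 2 / (2 * Real.exp m ^ 2)) * Real.exp (-b * x ^ 2) := by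
          rw [Real.exp_add, one_div, mul_inv]; ring
  have hk1 : (1:ℝ) ≤ (k:ℝ) := by exact_mod_cast le_trans (by norm_num) hk
  have hU : mixDensity k w μ σ x ≤ B * Real.exp (-b * x ^ 2) := by
    have step : mixDensity k w μ σ x
        ≤ (1 / (Real.exp (-m) * Real.sqrt (2 * Real.pi)))
            * Real.exp (m ^ 2 / (2 * Real.exp m ^ 2)) * Real.exp (-b * x ^ 2) := by
      unfold mixDensity
      calc ∑ j, w j * gaussDensity x (μ j) (σ j)
          ≤ ∑ j, w j * ((1 / (Real.exp (-m) * Real.sqrt (2 * Real.pi)))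
              * Real.exp (m ^ 2 / (2 * Real.exp m ^ 2)) * Real.exp (-b * x ^ 2)) :=
            Finset.sum_le_sum fun j _ => mul_le_mul_of_nonneg_left (hU0 j) (hw0 j)
        _ = _ := by rw [← Finset.sum_mul, hw1, one_mul]
    refine le_trans step ?_
    rw [hB]
    have : (1 : ℝ) / (Real.exp (-m) * Real.sqrt (2 * Real.pi))
        ≤ (k:ℝ) / (Real.exp (-m) * Real.sqrt (2 * Real.pi)) := by
      apply div_le_div_of_nonneg_right hk1 (by positivity)
    exact mul_le_mul_of_nonneg_right
      (mul_le_mul_of_nonneg_right this (Real.exp_pos _).le) (Real.exp_pos _).le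
  refine ⟨hL, le_trans hU (le_of_eq rfl), ?_⟩
  -- log envelope
  have hfpos : 0 < mixDensity k w μ σ x :=
    lt_of_lt_of_le (by positivity) hL
  have hA1 : A ≤ 1 := by
    rw [hA]
    have h1 : (Real.exp m * Real.sqrt (2 * Real.pi))⁻¹ ≤ 1 := by
      apply inv_le_one_of_one_le₀
      have h := mul_le_mul hem1 hsqrt zero_le_one heM.le
      linarith
    have h2 : Real.exp (-(m ^ 2) / Real.exp (-m) ^ 2) ≤ 1 := by
      rw [Real.exp_le_one_iff]
      apply div_nonpos_of_nonpos_of_nonneg (by linarith) hE.le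
    exact mul_le_one₀ h1 (Real.exp_pos _).le h2
  have hnlA : 0 ≤ -Real.log A := by
    simp only [neg_nonneg]
    exact Real.log_nonpos hApos.le hA1
  set M := max (-Real.log A) (Real.log B) with hM
  set N := max a b with hN
  have hM0 : 0 ≤ M := le_trans hnlA (le_max_left _ _)
  have hN0 : 0 ≤ N := le_trans (by positivity) (le_max_left a b)
  have hlogL : Real.log A - a * x ^ 2 ≤ Real.log (mixDensity k w μ σ x) := by
    have := Real.log_le_log (by positivity) hL
    rwa [Real.log_mul hApos.ne' (Real.exp_ne_zero _), Real.log_exp, neg_mul,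
      ← sub_eq_add_neg] at this
  have hBpos : 0 < B := by rw [hB]; positivity
  have hlogU : Real.log (mixDensity k w μ σ x) ≤ Real.log B - b * x ^ 2 := by
    have := Real.log_le_log hfpos hU
    rwa [Real.log_mul hBpos.ne' (Real.exp_ne_zero _), Real.log_exp, neg_mul,
      ← sub_eq_add_neg] at this
  have hb0 : 0 ≤ b := by rw [hb]; positivity
  exact logEnvAux M N a b (Real.log A) (Real.log B) _ (x ^ 2) hM0 hN0 (sq_nonneg x)
    (le_max_left _ _) (le_max_right _ _) (le_max_left _ _) hb0 hlogL hlogU
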